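/- arXiv:1509.04429 — 2 statements merged into one kernel-verified Lean document; each statement's English description precedes it below -/
import Mathlib

section
/- For any matrix γ = (a b; c d) in SL(2,ℤ) with c ≠ 0, the quantity Φ(γ) = (a+d)/c − 12·sign(c)·s(a;|c|) is an integer. -/
open scoped Classical in
/-- The sawtooth function `((x))`. -/
noncomputable def sawtooth (x : ℝ) : ℝ :=
  if ∃ n : ℤ, (n : ℝ) = x then 0 else Int.fract x - 1/2

/-- The Dedekind sum `s(a;c)`. -/
noncomputable def dedekindSum (a c : ℤ) : ℝ :=
  ∑ n ∈ Finset.Ico (1:ℤ) c, sawtooth ((n : ℝ) / c) * sawtooth ((n * a : ℝ) / c)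

/-!
For `0 < n < c` both sawtooth values in `s(a;c)` are explicit in terms of the residue
`r n = n * a % c`, and `n ↦ r n` permutes `1, …, c - 1` when `a` is prime to `c`; hence
`4 c² s(a;c) = 4 ∑ n r(n) - c² (c - 1)`. As `c ∣ n a - r n`, the sum `∑ (n a - r n)²` is
divisible by `c²`; expanding it with `∑ r(n)² = ∑ n²` and `a d ≡ 1 (mod c)` gives
`12 ∑ n r(n) ≡ c (a + d) (mod c²)`, which is the integrality of `(a + d) / c - 12 s(a;c)`.
Negative `c` reduces to positive `c` through `s(-a;c) = -s(a;c)`.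
-/

open Finset

lemma sawtooth_eq_ite (x : ℝ) :
    sawtooth x = if Int.fract x = 0 then 0 else Int.fract x - 1/2 := by
  classical
  exact if_congr (by rw [Int.fract_eq_zero_iff]; rfl) rfl rfl

lemma sawtooth_neg (x : ℝ) : sawtooth (-x) = -sawtooth x := by
  simp_rw [sawtooth_eq_ite, Int.fract_neg_eq_zero]
  split_ifs with hx
  · simp
  · rw [Int.fract_neg hx]; ring

lemma Int.fract_intCast_div_intCast {m c : ℤ} (hc : 0 ≤ c) :
    Int.fract ((m : ℝ) / c) = ((m % c : ℤ) : ℝ) / c := by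
  lift c to ℕ using hc
  exact Int.fract_div_intCast_eq_div_intCast_mod

lemma sawtooth_intCast_div_intCast {m c : ℤ} (hc : 0 < c) (hm : ¬c ∣ m) :
    sawtooth ((m : ℝ) / c) = ((m % c : ℤ) : ℝ) / c - 1/2 := by
  have hmod : m % c ≠ 0 := mt Int.dvd_of_emod_eq_zero hm
  rw [sawtooth_eq_ite, Int.fract_intCast_div_intCast hc.le, if_neg]
  exact div_ne_zero (Int.cast_ne_zero.2 hmod) (Int.cast_ne_zero.2 hc.ne')

lemma dedekindSum_neg_left (a c : ℤ) : dedekindSum (-a) c = -dedekindSum a c := by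
  rw [dedekindSum, dedekindSum, ← sum_neg_distrib]
  refine sum_congr rfl fun n _ => ?_
  rw [Int.cast_neg, mul_neg, neg_div, sawtooth_neg, mul_neg]

lemma Int.not_dvd_of_mem_Ico_one {c n : ℤ} (hn : n ∈ Ico 1 c) : ¬c ∣ n := by
  rw [mem_Ico] at hn
  exact fun h => by linarith [Int.le_of_dvd (by linarith) h]

lemma Int.not_dvd_mul_of_mem_Ico_one {a c n : ℤ} (ha : IsCoprime a c) (hn : n ∈ Ico 1 c) :
    ¬c ∣ n * a :=
  fun h => Int.not_dvd_of_mem_Ico_one hn (ha.symm.dvd_of_dvd_mul_right h)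

lemma Int.isCoprime_of_mul_modEq_one {a c d : ℤ} (had : a * d ≡ 1 [ZMOD c]) : IsCoprime a c :=
  have ⟨e, he⟩ := had.dvd
  ⟨d, e, by linear_combination -he⟩

lemma Int.mul_emod_mem_Ico_one {a c n : ℤ} (ha : IsCoprime a c) (hn : n ∈ Ico 1 c) :
    n * a % c ∈ Ico 1 c := by
  have hc : 0 < c := by rw [mem_Ico] at hn; linarith
  have hmod : n * a % c ≠ 0 := mt Int.dvd_of_emod_eq_zero (Int.not_dvd_mul_of_mem_Ico_one ha hn)
  have := Int.emod_nonneg (n * a) hc.ne'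
  rw [mem_Ico]
  exact ⟨by omega, Int.emod_lt_of_pos _ hc⟩

lemma Int.sum_Ico_one_comp_mul_emod {M : Type*} [AddCommMonoid M] {a c : ℤ} (ha : IsCoprime a c)
    (f : ℤ → M) : ∑ n ∈ Ico 1 c, f (n * a % c) = ∑ n ∈ Ico 1 c, f n := by
  obtain ⟨u, v, huv⟩ := ha
  have hinv : ∀ {e e' : ℤ}, e * e' ≡ 1 [ZMOD c] →
      ∀ n ∈ Ico 1 c, n * e % c * e' % c = n := by
    intro e e' hee' n hn
    rw [mem_Ico] at hn
    have h : n * e % c * e' ≡ n [ZMOD c] := by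
      calc n * e % c * e' ≡ n * e * e' [ZMOD c] := (Int.mod_modEq _ _).mul_right _
        _ = n * (e * e') := by ring
        _ ≡ n * 1 [ZMOD c] := hee'.mul_left _
        _ = n := mul_one n
    rw [h, Int.emod_eq_of_lt (by omega) hn.2]
  have hau : a * u ≡ 1 [ZMOD c] := (Int.modEq_iff_dvd.2 ⟨-v, by linear_combination huv⟩).symm
  have hua : u * a ≡ 1 [ZMOD c] := by rwa [mul_comm]
  refine sum_nbij' (fun n => n * a % c) (fun n => n * u % c)
    (fun n hn => Int.mul_emod_mem_Ico_one (Int.isCoprime_of_mul_modEq_one hau) hn)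
    (fun n hn => Int.mul_emod_mem_Ico_one (Int.isCoprime_of_mul_modEq_one hua) hn)
    (hinv hau) (hinv hua) fun n _ => rfl

lemma Int.two_mul_sum_Ico_one_id {c : ℤ} (hc : 1 ≤ c) :
    2 * ∑ n ∈ Ico 1 c, n = c * (c - 1) := by
  induction c, hc using Int.leInduction with
  | base => simp
  | succ c hc ih =>
    rw [← insert_Ico_right_eq_Ico_add_one hc, sum_insert right_notMem_Ico]
    linear_combination ih

lemma Int.six_mul_sum_Ico_one_sq {c : ℤ} (hc : 1 ≤ c) :
    6 * ∑ n ∈ Ico 1 c, n ^ 2 = (c - 1) * c * (2 * c - 1) := by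
  induction c, hc using Int.leInduction with
  | base => simp
  | succ c hc ih =>
    rw [← insert_Ico_right_eq_Ico_add_one hc, sum_insert right_notMem_Ico]
    linear_combination ih

lemma four_mul_sq_mul_dedekindSum {a c : ℤ} (hc : 0 < c) (ha : IsCoprime a c) :
    4 * (c : ℝ) ^ 2 * dedekindSum a c
      = ((4 * ∑ n ∈ Ico 1 c, n * (n * a % c) - c ^ 2 * (c - 1) : ℤ) : ℝ) := by
  have hterm : ∀ n ∈ Ico 1 c,
      4 * (c : ℝ) ^ 2 * (sawtooth ((n : ℝ) / c) * sawtooth ((n * a : ℝ) / c))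
        = (((2 * n - c) * (2 * (n * a % c) - c) : ℤ) : ℝ) := by
    intro n hn
    have hn_lt : n < c := (mem_Ico.1 hn).2
    have hn_pos : 0 ≤ n := by linarith [(mem_Ico.1 hn).1]
    rw [← Int.cast_mul, sawtooth_intCast_div_intCast hc (Int.not_dvd_of_mem_Ico_one hn),
      sawtooth_intCast_div_intCast hc (Int.not_dvd_mul_of_mem_Ico_one ha hn),
      Int.emod_eq_of_lt hn_pos hn_lt]
    field_simp
    push_cast
    ring
  have hsum_r : ∑ n ∈ Ico 1 c, n * a % c = ∑ n ∈ Ico 1 c, n :=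
    Int.sum_Ico_one_comp_mul_emod ha id
  have hexpand : ∀ n ∈ Ico 1 c, (2 * n - c) * (2 * (n * a % c) - c)
      = 4 * (n * (n * a % c)) - 2 * c * n - 2 * c * (n * a % c) + c ^ 2 := fun n _ => by ring
  have hcard : ((Ico 1 c).card : ℤ) = c - 1 := Int.card_Ico_of_le _ _ hc
  rw [dedekindSum, mul_sum, sum_congr rfl hterm, ← Int.cast_sum]
  congr 1
  rw [sum_congr rfl hexpand, sum_add_distrib, sum_sub_distrib, sum_sub_distrib,
    ← mul_sum, ← mul_sum, ← mul_sum, hsum_r,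
    sum_const, nsmul_eq_mul, hcard]
  linear_combination (-2 * c) * Int.two_mul_sum_Ico_one_id hc

lemma twelve_mul_sum_mul_emod_modEq {a c d : ℤ} (hc : 0 < c) (had : a * d ≡ 1 [ZMOD c]) :
    12 * ∑ n ∈ Ico 1 c, n * (n * a % c) ≡ c * (a + d) [ZMOD c ^ 2] := by
  obtain ⟨e, he⟩ := had.dvd
  have ha := Int.isCoprime_of_mul_modEq_one had
  have hsq : c ^ 2 ∣
      (1 + a ^ 2) * ∑ n ∈ Ico 1 c, n ^ 2 - 2 * a * ∑ n ∈ Ico 1 c, n * (n * a % c) := by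
    have hsum_sq : ∑ n ∈ Ico 1 c, (n * a % c) ^ 2 = ∑ n ∈ Ico 1 c, n ^ 2 :=
      Int.sum_Ico_one_comp_mul_emod ha (· ^ 2)
    have hexpand : ∀ n ∈ Ico 1 c, (n * a - n * a % c) ^ 2
        = a ^ 2 * n ^ 2 - 2 * a * (n * (n * a % c)) + (n * a % c) ^ 2 := fun n _ => by ring
    have hsum : ∑ n ∈ Ico 1 c, (n * a - n * a % c) ^ 2
        = (1 + a ^ 2) * ∑ n ∈ Ico 1 c, n ^ 2 - 2 * a * ∑ n ∈ Ico 1 c, n * (n * a % c) := by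
      rw [sum_congr rfl hexpand, sum_add_distrib, sum_sub_distrib, ← mul_sum, ← mul_sum,
        hsum_sq]
      ring
    rw [← hsum]
    refine dvd_sum fun n _ => pow_dvd_pow_of_dvd ?_ 2
    exact ⟨n * a / c, by rw [Int.emod_def]; ring⟩
  obtain ⟨t, ht⟩ := hsq
  have hmul : c ^ 2 ∣ a * (c * (a + d) - 12 * ∑ n ∈ Ico 1 c, n * (n * a % c)) :=
    ⟨6 * t - e - (1 + a ^ 2) * (2 * c - 3), by
      linear_combination 6 * ht - (1 + a ^ 2) * Int.six_mul_sum_Ico_one_sq hc - c * he⟩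
  exact Int.modEq_iff_dvd.2 (ha.symm.pow_left.dvd_of_dvd_mul_left hmul)

lemma exists_intCast_eq_div_sub_dedekindSum {a c d : ℤ} (hc : 0 < c)
    (had : a * d ≡ 1 [ZMOD c]) :
    ∃ k : ℤ, ((a + d : ℤ) : ℝ) / c - 12 * dedekindSum a c = k := by
  obtain ⟨t, ht⟩ := (twelve_mul_sum_mul_emod_modEq hc had).dvd
  have hs := four_mul_sq_mul_dedekindSum hc (Int.isCoprime_of_mul_modEq_one had)
  refine ⟨t + 3 * (c - 1), ?_⟩
  have hcR : (c : ℝ) ≠ 0 := Int.cast_ne_zero.2 hc.ne'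
  have htR : ((c * (a + d) - 12 * ∑ n ∈ Ico 1 c, n * (n * a % c) : ℤ) : ℝ)
      = ((c ^ 2 * t : ℤ) : ℝ) := congrArg _ ht
  push_cast at hs htR ⊢
  refine mul_left_cancel₀ (pow_ne_zero 2 hcR) ?_
  rw [mul_sub, show (c : ℝ) ^ 2 * ((a + d) / c) = c * (a + d) by field_simp]
  linear_combination htR - 3 * hs

theorem Phi_is_integer (γ : Matrix.SpecialLinearGroup (Fin 2) ℤ)
    (hc : γ 1 0 ≠ 0) :
    ∃ k : ℤ,
      ((γ 0 0 + γ 1 1 : ℤ) : ℝ) / (γ 1 0 : ℤ)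
        - 12 * ((γ 1 0).sign : ℝ) * dedekindSum (γ 0 0) |γ 1 0| = (k : ℝ) := by
  have hdet : γ 0 0 * γ 1 1 - γ 0 1 * γ 1 0 = 1 := by
    rw [← Matrix.det_fin_two]; exact γ.det_coe
  have had : γ 0 0 * γ 1 1 ≡ 1 [ZMOD γ 1 0] :=
    Int.modEq_iff_dvd.2 ⟨-γ 0 1, by linear_combination -hdet⟩
  rcases hc.lt_or_gt with hneg | hpos
  · have had' : -γ 0 0 * -γ 1 1 ≡ 1 [ZMOD -γ 1 0] := by
      rw [neg_mul_neg, Int.modEq_neg]; exact had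
    obtain ⟨k, hk⟩ := exists_intCast_eq_div_sub_dedekindSum (neg_pos.2 hneg) had'
    refine ⟨k, ?_⟩
    rw [Int.sign_eq_neg_one_of_neg hneg, abs_of_neg hneg, ← hk, dedekindSum_neg_left]
    push_cast
    rw [← neg_add, neg_div_neg_eq]
    ring
  · obtain ⟨k, hk⟩ := exists_intCast_eq_div_sub_dedekindSum hpos had
    rw [Int.sign_eq_one_of_pos hpos, abs_of_pos hpos]
    exact ⟨k, by simpa using hk⟩
end

section
/- For a nonzero integer c and z in the upper half-plane, log(−(cz+d)²) = 2·log((cz+d)/(i·sign(c))), where log is the principal branch of the complex logarithm with argument in (−π, π]. -/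
theorem log_neg_sq (c : ℤ) (hc : c ≠ 0) (d : ℝ) (z : ℂ) (hz : 0 < z.im) :
    Complex.log (-((c : ℂ) * z + (d : ℂ)) ^ 2)
      = 2 * Complex.log (((c : ℂ) * z + (d : ℂ)) / (Complex.I * ((c.sign : ℤ) : ℂ))) := by
  set w : ℂ := (c : ℂ) * z + (d : ℂ) with hw
  set s : ℂ := ((c.sign : ℤ) : ℂ) with hs
  have hwim : w.im = (c : ℝ) * z.im := by simp [hw]
  have hsign : c.sign = 1 ∨ c.sign = -1 := by
    rcases hc.lt_or_gt with h | h
    · exact Or.inr (Int.sign_eq_neg_one_iff_neg.2 h)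
    · exact Or.inl (Int.sign_eq_one_iff_pos.2 h)
  have hs1 : s = 1 ∨ s = -1 := by
    rcases hsign with h | h <;> simp [hs, h]
  have hssq : s ^ 2 = 1 := by rcases hs1 with h | h <;> simp [h]
  have hsne : s ≠ 0 := by rcases hs1 with h | h <;> simp [h]
  have hwne : w ≠ 0 := by
    intro h
    have : w.im = 0 := by simp [h]
    rw [hwim] at this
    rcases mul_eq_zero.1 this with h' | h'
    · exact hc (by exact_mod_cast h')
    · exact hz.ne' h'
  set u : ℂ := w / (Complex.I * s) with hu
  have hune : u ≠ 0 := div_ne_zero hwne (mul_ne_zero Complex.I_ne_zero hsne)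
  have hu2 : u ^ 2 = -w ^ 2 := by
    rw [hu, div_pow, mul_pow, Complex.I_sq, hssq]
    field_simp
  have hure : 0 < u.re := by
    rcases hsign with h | h
    · have hsv : s = 1 := by simp [hs, h]
      have hcpos : (0:ℤ) < c := Int.sign_eq_one_iff_pos.1 h
      have : u.re = w.im := by rw [hu, hsv, mul_one, Complex.div_I]; simp
      rw [this, hwim]
      exact mul_pos (by exact_mod_cast hcpos) hz
    · have hsv : s = -1 := by simp [hs, h]
      have hcneg : c < 0 := Int.sign_eq_neg_one_iff_neg.1 h
      have huval : u = w * Complex.I := by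
        rw [hu, hsv]
        rw [show Complex.I * (-1) = -Complex.I by ring, div_neg, Complex.div_I]
        ring
      have : u.re = -w.im := by rw [huval]; simp
      rw [this, hwim, neg_mul_eq_neg_mul]
      exact mul_pos (by exact_mod_cast (neg_pos.2 hcneg)) hz
  have harg : Complex.arg u + Complex.arg u ∈ Set.Ioc (-Real.pi) Real.pi := by
    have h1 : |Complex.arg u| < Real.pi / 2 :=
      Complex.abs_arg_lt_pi_div_two_iff.2 (Or.inl hure)
    rw [abs_lt] at h1
    constructor <;> [nlinarith [h1.1]; nlinarith [h1.2]]
  calc Complex.log (-w ^ 2) = Complex.log (u * u) := by rw [← hu2]; ring_nf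
    _ = Complex.log u + Complex.log u := Complex.log_mul hune hune harg
    _ = 2 * Complex.log u := by ring
end
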